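/- Let X ⊆ ω be infinite, let E₁ <_∞ E₂ <_∞ ⋯ <_∞ E_n be an infinitely finer sequence of equivalence relations on X, and let f : ω → ω. Then there exists an infinite Y ⊆ X such that ⟨E₁↾Y, …, E_n↾Y⟩ is still infinitely finer and f↾Y is either one-to-one, or constant, or there exists i ≤ n such that f is constant on each E_i↾Y class but takes distinct values on distinct classes. -/

import Mathlib

open Ordinal Set

/-- The order type of a set of ordinals: the unique ordinal order-isomorphic to it. -/
noncomputable def otype (S : Set Ordinal.{0}) : Ordinal.{1} :=
  @Ordinal.type S (Subrel (· < ·) S) (by exact (inferInstance : IsWellOrder {x // x ∈ S} (Subrel (· < ·) (· ∈ S))))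

/-- `f` is finite-to-one on `X`. -/
def FinToOneOn (f : ℕ → ℕ) (X : Set ℕ) : Prop := ∀ n : ℕ, (X ∩ f ⁻¹' {n}).Finite

/-- `f` is constant on `X`. -/
def ConstOn (f : ℕ → ℕ) (X : Set ℕ) : Prop := ∃ c : ℕ, ∀ x ∈ X, f x = c

/-- `V >_∞ U`: some `f` pushes `V` forward to `U` but `f` is neither finite-to-one
nor constant on any member of `V`. -/
def InfGT (V U : Ultrafilter ℕ) : Prop :=
  ∃ f : ℕ → ℕ, Ultrafilter.map f V = U ∧ ∀ X ∈ V, ¬ FinToOneOn f X ∧ ¬ ConstOn f X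
/-- `E` is an equivalence relation on the set `X`. -/
def EqvOn (E : ℕ → ℕ → Prop) (X : Set ℕ) : Prop :=
  (∀ x ∈ X, E x x) ∧ (∀ x ∈ X, ∀ y ∈ X, E x y → E y x) ∧
    (∀ x ∈ X, ∀ y ∈ X, ∀ z ∈ X, E x y → E y z → E x z)

/-- The `E`-equivalence class of `x` within `X`. -/
def eclass (E : ℕ → ℕ → Prop) (X : Set ℕ) (x : ℕ) : Set ℕ := {y ∈ X | E x y}

/-- `E <_∞ F` on `X`: `E` refines `F` and every `F`-class is a union of infinitely
many `E`-classes. -/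
def InfFiner (E F : ℕ → ℕ → Prop) (X : Set ℕ) : Prop :=
  (∀ x ∈ X, ∀ y ∈ X, E x y → F x y) ∧
    ∀ x ∈ X, {C : Set ℕ | ∃ y ∈ X, F x y ∧ C = eclass E X y}.Infinite

/-- `⟨E 1, …, E n⟩` is an infinitely finer (`if`) sequence of equivalence relations on `X`. -/
def IfSeq (E : ℕ → ℕ → ℕ → Prop) (n : ℕ) (X : Set ℕ) : Prop :=
  (∀ i, 1 ≤ i → i ≤ n → EqvOn (E i) X) ∧
    ∀ i, 1 ≤ i → i < n → InfFiner (E i) (E (i + 1)) X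

namespace Stmt8Aux


/-- Image list of an embedding `G` applied below accumulated domain prefix `pre`. -/
def Eaux (G : List ℕ → ℕ) : List ℕ → List ℕ → List ℕ
  | _, [] => []
  | pre, a :: l => G (pre ++ [a]) :: Eaux G (pre ++ [a]) l

def EG (G : List ℕ → ℕ) (l : List ℕ) : List ℕ := Eaux G [] l

/-- `G` is a level-embedding code. -/
def IsEmb (G : List ℕ → ℕ) : Prop := ∀ pre a b, G (pre ++ [a]) = G (pre ++ [b]) → a = b

def comp (G₁ G₂ : List ℕ → ℕ) : List ℕ → ℕ := fun l => G₁ (EG G₂ l)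

@[simp] lemma Eaux_nil (G : List ℕ → ℕ) (pre : List ℕ) : Eaux G pre [] = [] := rfl

@[simp] lemma Eaux_cons (G : List ℕ → ℕ) (pre : List ℕ) (a : ℕ) (l : List ℕ) :
    Eaux G pre (a :: l) = G (pre ++ [a]) :: Eaux G (pre ++ [a]) l := rfl

lemma Eaux_length (G : List ℕ → ℕ) : ∀ (l pre : List ℕ), (Eaux G pre l).length = l.length
  | [], _ => rfl
  | a :: l, pre => by simp [Eaux_length G l]

@[simp] lemma EG_length (G : List ℕ → ℕ) (l : List ℕ) : (EG G l).length = l.length :=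
  Eaux_length G l []

lemma Eaux_append (G : List ℕ → ℕ) :
    ∀ (l₁ l₂ pre : List ℕ), Eaux G pre (l₁ ++ l₂) = Eaux G pre l₁ ++ Eaux G (pre ++ l₁) l₂
  | [], l₂, pre => by simp
  | a :: l₁, l₂, pre => by
    simp [Eaux_append G l₁ l₂ (pre ++ [a])]

lemma EG_snoc (G : List ℕ → ℕ) (l : List ℕ) (a : ℕ) :
    EG G (l ++ [a]) = EG G l ++ [G (l ++ [a])] := by
  simp [EG, Eaux_append]

lemma Eaux_congr {G₁ G₂ : List ℕ → ℕ} (h : ∀ l, l ≠ [] → G₁ l = G₂ l) :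
    ∀ (l pre : List ℕ), Eaux G₁ pre l = Eaux G₂ pre l
  | [], _ => rfl
  | a :: l, pre => by
    simp [Eaux_congr h l (pre ++ [a]), h (pre ++ [a]) (by simp)]

lemma Eaux_shift (G : List ℕ → ℕ) (x : ℕ) :
    ∀ (l pre : List ℕ), Eaux G (x :: pre) l = Eaux (fun l' => G (x :: l')) pre l
  | [], _ => rfl
  | a :: l, pre => by
    simp [Eaux_shift G x l (pre ++ [a])]

lemma EG_comp (G₁ G₂ : List ℕ → ℕ) : ∀ l, EG (comp G₁ G₂) l = EG G₁ (EG G₂ l) := by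
  suffices h : ∀ (l pre : List ℕ), Eaux (comp G₁ G₂) pre l = Eaux G₁ (EG G₂ pre) (Eaux G₂ pre l) by
    intro l; exact h l []
  intro l
  induction l with
  | nil => simp
  | cons a l ih =>
    intro pre
    simp only [Eaux_cons, ih (pre ++ [a])]
    rw [comp, EG_snoc]

lemma IsEmb.comp {G₁ G₂ : List ℕ → ℕ} (h₁ : IsEmb G₁) (h₂ : IsEmb G₂) :
    IsEmb (comp G₁ G₂) := by
  intro pre a b hab
  simp only [Stmt8Aux.comp, EG_snoc] at hab
  exact h₂ pre a b (h₁ _ _ _ hab)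

lemma EG_take (G : List ℕ → ℕ) (l : List ℕ) (j : ℕ) :
    (EG G l).take j = EG G (l.take j) := by
  rcases le_or_gt l.length j with h | h
  · rw [List.take_of_length_le (by rw [EG_length]; exact h), List.take_of_length_le h]
  · have hsplit : l = l.take j ++ l.drop j := (List.take_append_drop j l).symm
    calc (EG G l).take j = (EG G (l.take j) ++ Eaux G (l.take j) (l.drop j)).take j := by
          conv_lhs => rw [hsplit]
          rw [EG, Eaux_append]
          simp [EG]
      _ = EG G (l.take j) := List.take_left' (by rw [EG_length, List.length_take]; omega)

lemma Eaux_inj {G : List ℕ → ℕ} (hG : IsEmb G) :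
    ∀ (l l' pre : List ℕ), Eaux G pre l = Eaux G pre l' → l = l'
  | [], [], _, _ => rfl
  | [], _ :: _, _, h => by simp at h
  | _ :: _, [], _, h => by simp at h
  | a :: l, b :: l', pre, h => by
    simp only [Eaux_cons, List.cons.injEq] at h
    obtain ⟨h1, h2⟩ := h
    obtain rfl := hG pre a b h1
    rw [Eaux_inj hG l l' (pre ++ [a]) h2]

lemma EG_inj {G : List ℕ → ℕ} (hG : IsEmb G) {l l' : List ℕ} (h : EG G l = EG G l') :
    l = l' := Eaux_inj hG l l' [] h




lemma PH (X : Set ℕ) (hX : X.Infinite) (f : ℕ → ℕ) :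
    ∃ Y, Y ⊆ X ∧ Y.Infinite ∧ (ConstOn f Y ∨ Set.InjOn f Y) := by
  by_cases h : ∃ v, (X ∩ f ⁻¹' {v}).Infinite
  · obtain ⟨v, hv⟩ := h
    exact ⟨X ∩ f ⁻¹' {v}, inter_subset_left, hv, Or.inl ⟨v, fun x hx => hx.2⟩⟩
  · push_neg at h
    have hfin : ∀ v, (X ∩ f ⁻¹' {v}).Finite := fun v => h v
    have hV : (f '' X).Infinite := by
      intro hVf
      apply hX
      have hsub : X ⊆ ⋃ v ∈ f '' X, (X ∩ f ⁻¹' {v}) := fun x hx =>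
        Set.mem_biUnion ⟨x, hx, rfl⟩ ⟨hx, rfl⟩
      exact (hVf.biUnion (fun v _ => hfin v)).subset hsub
    have hsel : ∀ v : f '' X, ∃ x, x ∈ X ∧ f x = (v : ℕ) := by
      rintro ⟨v, x, hx, rfl⟩; exact ⟨x, hx, rfl⟩
    choose g hgX hgf using hsel
    have hginj : Function.Injective g := by
      intro v w hvw
      apply Subtype.ext
      rw [← hgf v, ← hgf w, hvw]
    haveI := hV.to_subtype
    refine ⟨Set.range g, ?_, Set.infinite_range_of_injective hginj, Or.inr ?_⟩
    · rintro x ⟨v, rfl⟩; exact hgX v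
    · rintro x ⟨v, rfl⟩ y ⟨w, rfl⟩ hxy
      have hvw : v = w := Subtype.ext (by rw [← hgf v, ← hgf w, hxy])
      rw [hvw]

lemma exists_infinite_fiber {m : ℕ} {g : ℕ → ℕ} (hg : ∀ a, g a ≤ m) :
    ∃ k, k ≤ m ∧ {a | g a = k}.Infinite := by
  by_contra h
  push_neg at h
  apply Set.infinite_univ (α := ℕ)
  have hsub : (Set.univ : Set ℕ) ⊆ ⋃ k ∈ Set.Iic m, {a | g a = k} := fun a _ =>
    Set.mem_biUnion (hg a) rfl
  exact ((Set.finite_Iic m).biUnion (fun k hk => h k hk)).subset hsub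

open Classical in
noncomputable def fusList (Φ : ℕ → ℕ → ℕ) : ℕ → List ℕ
  | 0 => []
  | t + 1 =>
    fusList Φ t ++
      [if h : ∃ c, ∀ r, r < t → Φ t c ≠ Φ r ((fusList Φ t).getD r 0) then h.choose else 0]

noncomputable def fusV (Φ : ℕ → ℕ → ℕ) (t : ℕ) : ℕ := (fusList Φ (t + 1)).getD t 0

lemma fusList_length (Φ : ℕ → ℕ → ℕ) : ∀ t, (fusList Φ t).length = t
  | 0 => rfl
  | t + 1 => by simp [fusList, fusList_length Φ t]

lemma fusList_getD (Φ : ℕ → ℕ → ℕ) {r t : ℕ} (h : r < t) :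
    (fusList Φ t).getD r 0 = fusV Φ r := by
  induction t with
  | zero => omega
  | succ t ih =>
    rcases Nat.lt_succ_iff_lt_or_eq.mp h with h' | rfl
    · rw [← ih h']
      rw [fusList, List.getD_append _ _ _ _ (by rw [fusList_length]; exact h')]
    · rfl

lemma fusV_ne {Φ : ℕ → ℕ → ℕ} {t r : ℕ} (hrt : r < t)
    (hinj : Function.Injective (Φ t)) :
    Φ t (fusV Φ t) ≠ Φ r (fusV Φ r) := by
  have hex : ∃ c, ∀ r, r < t → Φ t c ≠ Φ r ((fusList Φ t).getD r 0) := by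
    have hfin : {c | ∃ r, r < t ∧ Φ t c = Φ r ((fusList Φ t).getD r 0)}.Finite := by
      have hsub : {c | ∃ r, r < t ∧ Φ t c = Φ r ((fusList Φ t).getD r 0)} ⊆
          ⋃ r ∈ Set.Iio t, {c | Φ t c = Φ r ((fusList Φ t).getD r 0)} := by
        rintro c ⟨r, hr, hc⟩; exact Set.mem_biUnion hr hc
      refine ((Set.finite_Iio t).biUnion fun r _ => ?_).subset hsub
      exact Set.Subsingleton.finite fun c hc c' hc' => hinj (hc.trans hc'.symm)
    obtain ⟨c, hc⟩ := hfin.infinite_compl.nonempty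
    exact ⟨c, fun r hr heq => hc ⟨r, hr, heq⟩⟩
  have hV : fusV Φ t = hex.choose := by
    show (fusList Φ (t + 1)).getD t 0 = _
    rw [fusList, List.getD_append_right _ _ _ _ (by rw [fusList_length]),
      fusList_length, Nat.sub_self, dif_pos hex]
    rfl
  rw [hV, ← fusList_getD Φ hrt]
  exact hex.choose_spec r hrt

lemma EG_cons_of (G : List ℕ → ℕ) (Gb : List ℕ → ℕ) (b : ℕ)
    (h : ∀ l', l' ≠ [] → G (b :: l') = Gb l') (l : List ℕ) :
    EG G (b :: l) = G [b] :: EG Gb l := by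
  rw [EG, Eaux_cons]
  congr 1
  rw [List.nil_append, Eaux_shift, EG]
  exact Eaux_congr (by intro l' hl'; exact h l' hl') l []

lemma take_split (l : List ℕ) (k : ℕ) (hk : 1 ≤ k) (h : k ≤ l.length) :
    l.take k = l.take (k - 1) ++ [l.getD (k - 1) 0] := by
  obtain ⟨j, rfl⟩ : ∃ j, k = j + 1 := ⟨k - 1, by omega⟩
  simp only [Nat.add_sub_cancel]
  have hlt : j < l.length := by omega
  rw [List.take_succ, List.getElem?_eq_getElem hlt, List.getD_eq_getElem l 0 hlt]
  simp

lemma canonB (m : ℕ) (f : List ℕ → ℕ) :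
    ∃ G, IsEmb G ∧ ∃ k, k ≤ m ∧ ∀ l l', l.length = m → l'.length = m →
      (f (EG G l) = f (EG G l') ↔ l.take k = l'.take k) := by
  induction m generalizing f with
  | zero =>
    refine ⟨fun l => l.getLastD 0, ?_, 0, le_refl 0, ?_⟩
    · intro pre a b h; simpa using h
    · intro l l' hl hl'
      rw [List.length_eq_zero_iff.mp hl, List.length_eq_zero_iff.mp hl']
      simp
  | succ m ih =>
    have hsub : ∀ a : ℕ, ∃ G, IsEmb G ∧ ∃ k, k ≤ m ∧ ∀ l l', l.length = m → l'.length = m →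
        (f (a :: EG G l) = f (a :: EG G l') ↔ l.take k = l'.take k) :=
      fun a => ih (fun l => f (a :: l))
    choose Gs hGs ks hks hcan using hsub
    obtain ⟨k, hk, hkinf⟩ := exists_infinite_fiber hks
    set α0 := hkinf.natEmbedding with hα0
    set α : ℕ → ℕ := fun b => (α0 b : ℕ) with hα
    have hαk : ∀ b, ks (α b) = k := fun b => (α0 b).2
    have hαinj : Function.Injective α := fun b b' h => α0.injective (Subtype.ext h)
    by_cases hk0 : k = 0
    · -- each subtree constant; use 1-dimensional analysis on the constants
      subst hk0
      set c : ℕ → ℕ := fun b => f (α b :: EG (Gs (α b)) (List.replicate m 0)) with hc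
      obtain ⟨Y, _, hYinf, hY⟩ := PH Set.univ Set.infinite_univ c
      set β0 := hYinf.natEmbedding with hβ0
      set β : ℕ → ℕ := fun b => (β0 b : ℕ) with hβ
      have hβY : ∀ b, β b ∈ Y := fun b => (β0 b).2
      have hβinj : Function.Injective β := fun b b' h => β0.injective (Subtype.ext h)
      set τ : ℕ → ℕ := fun b => α (β b) with hτ
      have hτinj : Function.Injective τ := fun b b' h => hβinj (hαinj h)
      set G' : List ℕ → ℕ := fun l => match l with
        | [] => 0
        | [b] => τ b
        | b :: c :: l' => Gs (τ b) (c :: l') with hG'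
      have hG'eq : ∀ b l', l' ≠ [] → G' (b :: l') = Gs (τ b) l' := by
        intro b l' h
        cases l' with
        | nil => exact absurd rfl h
        | cons c l'' => rfl
      have hval : ∀ b l0, l0.length = m → f (EG G' (b :: l0)) = c (β b) := by
        intro b l0 h0
        rw [EG_cons_of G' (Gs (τ b)) b (hG'eq b) l0]
        show f (τ b :: EG (Gs (τ b)) l0) = _
        have := (hcan (τ b) l0 (List.replicate m 0) h0 (by simp)).mpr
        rw [hαk (β b)] at this
        exact this rfl
      refine ⟨G', ?_, ?_⟩
      · intro pre a b h
        cases pre with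
        | nil => exact hτinj h
        | cons x pre' =>
          rw [List.cons_append, List.cons_append,
            hG'eq x _ (by simp), hG'eq x _ (by simp)] at h
          exact hGs (τ x) pre' a b h
      · rcases hY with ⟨C, hC⟩ | hinj
        · refine ⟨0, Nat.zero_le _, ?_⟩
          intro l l' hl hl'
          cases l with
          | nil => simp at hl
          | cons b l0 =>
            cases l' with
            | nil => simp at hl'
            | cons b' l0' =>
              rw [hval b l0 (by simpa using hl), hval b' l0' (by simpa using hl'),
                hC _ (hβY b), hC _ (hβY b')]
              simp
        · refine ⟨1, by omega, ?_⟩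
          intro l l' hl hl'
          cases l with
          | nil => simp at hl
          | cons b l0 =>
            cases l' with
            | nil => simp at hl'
            | cons b' l0' =>
              rw [hval b l0 (by simpa using hl), hval b' l0' (by simpa using hl')]
              constructor
              · intro h
                have := hβinj (hinj (hβY b) (hβY b') h)
                simp [this]
              · intro h2
                have hb : b = b' := by simpa using h2
                rw [hb]
    · -- k ≥ 1 : fusion
      have hk1 : 1 ≤ k := Nat.one_le_iff_ne_zero.mpr hk0
      set hfun : ℕ → List ℕ → ℕ := fun b l => f (α b :: EG (Gs (α b)) l) with hhfun
      set H : ℕ → List ℕ → ℕ := fun b q => hfun b (q ++ List.replicate (m - q.length) 0) with hHdef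
      have hHval : ∀ b l, l.length = m → hfun b l = H b (l.take k) := by
        intro b l hl
        have hlen : (l.take k).length = k := by rw [List.length_take]; omega
        show hfun b l = hfun b (l.take k ++ List.replicate (m - (l.take k).length) 0)
        rw [hlen]
        have := (hcan (α b) l (l.take k ++ List.replicate (m - k) 0) hl
          (by simp [hlen]; omega)).mpr
        rw [hαk b] at this
        exact this (by rw [List.take_left' hlen])
      have hHinj : ∀ b p a a', p.length = k - 1 →
          H b (p ++ [a]) = H b (p ++ [a']) → a = a' := by
        intro b p a a' hp heq
        have hlen : (p ++ [a]).length = k := by simp; omega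
        have hlen' : (p ++ [a']).length = k := by simp; omega
        have h2 := (hcan (α b) ((p ++ [a]) ++ List.replicate (m - k) 0)
          ((p ++ [a']) ++ List.replicate (m - k) 0)
          (by simp; omega) (by simp; omega)).mp
        rw [hαk b] at h2
        have h3 : ((p ++ [a]) ++ List.replicate (m - k) 0).take k =
            ((p ++ [a']) ++ List.replicate (m - k) 0).take k := by
          apply h2
          show hfun b _ = hfun b _
          have e1 : H b (p ++ [a]) = hfun b ((p ++ [a]) ++ List.replicate (m - k) 0) := by
            show hfun b _ = _
            rw [hlen]
          have e2 : H b (p ++ [a']) = hfun b ((p ++ [a']) ++ List.replicate (m - k) 0) := by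
            show hfun b _ = _
            rw [hlen']
          rw [← e1, ← e2, heq]
        rw [List.take_left' hlen, List.take_left' hlen'] at h3
        exact (List.cons.injEq _ _ _ _).mp (List.append_cancel_left h3) |>.1
      set eqv : ℕ ≃ ℕ × List ℕ × ℕ := (Denumerable.eqv (ℕ × List ℕ × ℕ)).symm with heqv
      set Φ : ℕ → ℕ → ℕ := fun t cc => H (eqv t).1 ((eqv t).2.1 ++ [cc]) with hΦ
      have hΦinj : ∀ t, (eqv t).2.1.length = k - 1 → Function.Injective (Φ t) :=
        fun t ht x y hxy => hHinj _ _ _ _ ht hxy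
      set ψ : ℕ → List ℕ → ℕ → ℕ := fun b p a => fusV Φ (eqv.symm (b, p, a)) with hψ
      have hΦval : ∀ b p a, Φ (eqv.symm (b, p, a)) (fusV Φ (eqv.symm (b, p, a))) =
          H b (p ++ [ψ b p a]) := by
        intro b p a
        rw [hΦ]
        simp only [Equiv.apply_symm_apply]
        rfl
      have hkey : ∀ b p a b' p' a', p.length = k - 1 → p'.length = k - 1 →
          (b, p, a) ≠ (b', p', a') →
          H b (p ++ [ψ b p a]) ≠ H b' (p' ++ [ψ b' p' a']) := by
        intro b p a b' p' a' hp hp' hne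
        have htt : eqv.symm (b, p, a) ≠ eqv.symm (b', p', a') :=
          fun hh => hne (eqv.symm.injective hh)
        rw [← hΦval b p a, ← hΦval b' p' a']
        rcases lt_or_gt_of_ne htt with hlt | hlt
        · exact (fusV_ne hlt (hΦinj _ (by simp [Equiv.apply_symm_apply, hp']))).symm
        · exact fusV_ne hlt (hΦinj _ (by simp [Equiv.apply_symm_apply, hp]))
      have hψinj : ∀ b p, p.length = k - 1 → Function.Injective (ψ b p) := by
        intro b p hp a a' heq
        by_contra hne
        exact hkey b p a b p a' hp hp (by simp [hne]) (by rw [heq])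
      set Gf : ℕ → List ℕ → ℕ := fun b l =>
        if l.length = k then ψ b l.dropLast (l.getLastD 0) else l.getLastD 0 with hGf
      have hGfapp : ∀ b pre a, Gf b (pre ++ [a]) =
          if pre.length + 1 = k then ψ b pre a else a := by
        intro b pre a
        rw [hGf]
        simp only [List.length_append, List.length_singleton, List.dropLast_concat,
          List.getLastD_concat]
      have hGfemb : ∀ b, IsEmb (Gf b) := by
        intro b pre a a' heq
        rw [hGfapp, hGfapp] at heq
        by_cases hlen : pre.length + 1 = k
        · rw [if_pos hlen, if_pos hlen] at heq
          exact hψinj b pre (by omega) heq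
        · rwa [if_neg hlen, if_neg hlen] at heq
      have hGfshort : ∀ b q pre, pre.length + q.length < k → Eaux (Gf b) pre q = q := by
        intro b q
        induction q with
        | nil => intro pre _; rfl
        | cons a q ihq =>
          intro pre hpre
          rw [Eaux_cons, hGfapp, if_neg (by simp at hpre; omega),
            ihq (pre ++ [a]) (by simp at hpre ⊢; omega)]
      have hGfk : ∀ b p a, p.length = k - 1 → EG (Gf b) (p ++ [a]) = p ++ [ψ b p a] := by
        intro b p a hp
        rw [EG_snoc]
        congr 1
        · exact hGfshort b p [] (by simp; omega)
        · rw [hGfapp, if_pos (by omega)]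
      set Gsub : ℕ → List ℕ → ℕ := fun b => comp (Gs (α b)) (Gf b) with hGsub
      set G' : List ℕ → ℕ := fun l => match l with
        | [] => 0
        | [b] => α b
        | b :: cc :: l' => Gsub b (cc :: l') with hG'
      have hG'eq : ∀ b l', l' ≠ [] → G' (b :: l') = Gsub b l' := by
        intro b l' hne
        cases l' with
        | nil => exact absurd rfl hne
        | cons cc l'' => rfl
      have hval : ∀ b l0, l0.length = m → f (EG G' (b :: l0)) =
          H b (l0.take (k - 1) ++ [ψ b (l0.take (k - 1)) (l0.getD (k - 1) 0)]) := by
        intro b l0 h0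
        rw [EG_cons_of G' (Gsub b) b (hG'eq b) l0]
        show f (α b :: EG (Gsub b) l0) = _
        rw [hGsub]
        simp only []
        rw [EG_comp]
        show hfun b (EG (Gf b) l0) = _
        rw [hHval b _ (by rw [EG_length]; exact h0), EG_take]
        have hsplit : l0.take k = l0.take (k - 1) ++ [l0.getD (k - 1) 0] :=
          take_split l0 k hk1 (by omega)
        rw [hsplit, hGfk b _ _ (by rw [List.length_take]; omega)]
      refine ⟨G', ?_, k + 1, by omega, ?_⟩
      · intro pre a b heq
        cases pre with
        | nil => exact hαinj heq
        | cons x pre' =>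
          rw [List.cons_append, List.cons_append,
            hG'eq x _ (by simp), hG'eq x _ (by simp)] at heq
          exact ((hGs (α x)).comp (hGfemb x)) pre' a b heq
      · intro l l' hl hl'
        cases l with
        | nil => simp at hl
        | cons b l0 =>
          cases l' with
          | nil => simp at hl'
          | cons b' l0' =>
            have h0 : l0.length = m := by simpa using hl
            have h0' : l0'.length = m := by simpa using hl'
            rw [hval b l0 h0, hval b' l0' h0']
            have hp : (l0.take (k - 1)).length = k - 1 := by
              rw [List.length_take]; omega
            have hp' : (l0'.take (k - 1)).length = k - 1 := by
              rw [List.length_take]; omega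
            have hsplit : l0.take k = l0.take (k - 1) ++ [l0.getD (k - 1) 0] :=
              take_split l0 k hk1 (by omega)
            have hsplit' : l0'.take k = l0'.take (k - 1) ++ [l0'.getD (k - 1) 0] :=
              take_split l0' k hk1 (by omega)
            constructor
            · intro heq
              have htrip : (b, l0.take (k - 1), l0.getD (k - 1) 0) =
                  (b', l0'.take (k - 1), l0'.getD (k - 1) 0) := by
                by_contra hne
                exact hkey _ _ _ _ _ _ hp hp' hne heq
              have hb : b = b' := congrArg Prod.fst htrip
              have hpp : l0.take (k - 1) = l0'.take (k - 1) :=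
                congrArg (fun z : ℕ × List ℕ × ℕ => z.2.1) htrip
              have haa : l0.getD (k - 1) 0 = l0'.getD (k - 1) 0 :=
                congrArg (fun z : ℕ × List ℕ × ℕ => z.2.2) htrip
              rw [List.take_succ_cons, List.take_succ_cons, hb, hsplit, hsplit', hpp, haa]
            · intro heq
              rw [List.take_succ_cons, List.take_succ_cons] at heq
              obtain ⟨hb, htk⟩ := (List.cons.injEq _ _ _ _).mp heq
              rw [hsplit, hsplit'] at htk
              have hppeq : l0.take (k - 1) = l0'.take (k - 1) :=
                List.append_inj' htk rfl |>.1
              have haaeq : l0.getD (k - 1) 0 = l0'.getD (k - 1) 0 := by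
                have := List.append_inj' htk rfl |>.2
                simpa using this
              rw [hb, hppeq, haaeq]


lemma coarsen {X : Set ℕ} {n : ℕ} {E : ℕ → ℕ → ℕ → Prop} (hE : IfSeq E n X) :
    ∀ i i', 1 ≤ i → i ≤ i' → i' ≤ n → ∀ x y, x ∈ X → y ∈ X → E i x y → E i' x y := by
  intro i i' h1 h2 h3
  induction i' with
  | zero => omega
  | succ j ihj =>
    intro x y hx hy hxy
    rcases Nat.lt_or_ge j i with hj | hj
    · have : i = j + 1 := by omega
      rwa [← this]
    · exact (hE.2 j (by omega) (by omega)).1 x hx y hy (ihj (by omega) (by omega) x y hx hy hxy)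

lemma normalization {X : Set ℕ} (hX : X.Infinite) {n : ℕ} (hn : 2 ≤ n)
    {E : ℕ → ℕ → ℕ → Prop} (hE : IfSeq E n X) :
    ∃ φ : List ℕ → ℕ, (∀ l, l.length = n - 1 → φ l ∈ X) ∧
      ∀ i, 1 ≤ i → i ≤ n → ∀ l l', l.length = n - 1 → l'.length = n - 1 →
        (E i (φ l) (φ l') ↔ l.take (n - i) = l'.take (n - i)) := by
  classical
  -- child selector
  have hgad : ∀ d x, ∃ ch : ℕ → ℕ, x ∈ X → d ≤ n - 2 →
      (∀ a, ch a ∈ X ∧ E (n - d) x (ch a)) ∧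
      (∀ a b, a ≠ b → ¬ E (n - d - 1) (ch a) (ch b)) := by
    intro d x
    by_cases hcase : x ∈ X ∧ d ≤ n - 2
    · obtain ⟨hx, hd⟩ := hcase
      have hi1 : 1 ≤ n - d - 1 := by omega
      have hi2 : n - d - 1 < n := by omega
      have hIF := hE.2 (n - d - 1) hi1 hi2
      have hplus : n - d - 1 + 1 = n - d := by omega
      have hinf := hIF.2 x hx
      set ι := hinf.natEmbedding with hι
      have hsel : ∀ a : ℕ, ∃ y, y ∈ X ∧ E (n - d - 1 + 1) x y ∧
          (ι a : Set ℕ) = eclass (E (n - d - 1)) X y := fun a => (ι a).2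
      choose y hy1 hy2 hy3 using hsel
      refine ⟨y, fun _ _ => ⟨fun a => ⟨hy1 a, by rw [← hplus]; exact hy2 a⟩, ?_⟩⟩
      intro a b hab hEab
      apply hab
      apply ι.injective
      apply Subtype.ext
      rw [hy3 a, hy3 b]
      have hEq := hE.1 (n - d - 1) hi1 (by omega)
      ext z
      simp only [eclass, Set.mem_setOf_eq, Set.mem_sep_iff]
      constructor
      · rintro ⟨hz, hza⟩
        exact ⟨hz, hEq.2.2 _ (hy1 b) _ (hy1 a) _ hz (hEq.2.1 _ (hy1 a) _ (hy1 b) hEab) hza⟩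
      · rintro ⟨hz, hzb⟩
        exact ⟨hz, hEq.2.2 _ (hy1 a) _ (hy1 b) _ hz hEab hzb⟩
    · exact ⟨fun _ => 0, fun hx hd => absurd ⟨hx, hd⟩ hcase⟩
  choose ch hch using hgad
  set F : ℕ × ℕ → ℕ → ℕ × ℕ := fun p a => (p.1 + 1, ch p.1 p.2 a) with hF
  set ν : ℕ → ℕ → List ℕ → ℕ := fun d x l => (l.foldl F (d, x)).2 with hν
  have hν_nil : ∀ d x, ν d x [] = x := fun d x => rfl
  have hν_cons : ∀ d x a l, ν d x (a :: l) = ν (d + 1) (ch d x a) l := fun d x a l => rfl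
  obtain ⟨x₀, hx₀⟩ := hX.nonempty
  have P1 : ∀ (l : List ℕ) d x, x ∈ X → d + l.length ≤ n - 1 → ν d x l ∈ X := by
    intro l
    induction l with
    | nil => intro d x hx _; exact hx
    | cons a l ihl =>
      intro d x hx hlen
      rw [hν_cons]
      exact ihl (d + 1) _ ((hch d x hx (by simp at hlen; omega)).1 a).1 (by simp at hlen ⊢; omega)
  have P2 : ∀ (l : List ℕ) d x, x ∈ X → d + l.length ≤ n - 1 → E (n - d) x (ν d x l) := by
    intro l
    induction l with
    | nil =>
      intro d x hx hlen
      exact (hE.1 (n - d) (by omega) (by omega)).1 x hx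
    | cons a l ihl =>
      intro d x hx hlen
      simp only [List.length_cons] at hlen
      have hd2 : d ≤ n - 2 := by omega
      have hy := (hch d x hx hd2).1 a
      have hstep : E (n - (d + 1)) (ch d x a) (ν (d + 1) (ch d x a) l) :=
        ihl (d + 1) _ hy.1 (by omega)
      have hco : E (n - d) (ch d x a) (ν (d + 1) (ch d x a) l) :=
        coarsen hE (n - (d + 1)) (n - d) (by omega) (by omega) (by omega) _ _ hy.1
          (P1 l (d + 1) _ hy.1 (by omega)) hstep
      have hEq := hE.1 (n - d) (by omega) (by omega)
      rw [hν_cons]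
      exact hEq.2.2 x hx _ hy.1 _ (P1 l (d + 1) _ hy.1 (by omega)) hy.2 hco
  have Pmain : ∀ (l l' : List ℕ) d x, x ∈ X → d + l.length = n - 1 → l.length = l'.length →
      ∀ i, 1 ≤ i → i ≤ n →
      (E i (ν d x l) (ν d x l') ↔ l.take (n - i - d) = l'.take (n - i - d)) := by
    intro l
    induction l with
    | nil =>
      intro l' d x hx hlen hll i hi1 hi2
      rw [List.length_nil] at hll
      rw [List.length_eq_zero_iff.mp hll.symm]
      exact iff_of_true ((hE.1 i hi1 hi2).1 x hx) (by simp)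
    | cons a l ihl =>
      intro l' d x hx hlen hll i hi1 hi2
      cases l' with
      | nil => simp at hll
      | cons a' l'' =>
        simp only [List.length_cons] at hlen hll
        by_cases hzero : n - i - d = 0
        · rw [hzero]
          refine iff_of_true ?_ (by simp)
          have h1 := P2 (a :: l) d x hx (by simp; omega)
          have h2 := P2 (a' :: l'') d x hx (by simp; omega)
          have hm1 : ν d x (a :: l) ∈ X := P1 _ d x hx (by simp; omega)
          have hm2 : ν d x (a' :: l'') ∈ X := P1 _ d x hx (by simp; omega)
          have hc1 := coarsen hE (n - d) i (by omega) (by omega) hi2 _ _ hx hm1 h1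
          have hc2 := coarsen hE (n - d) i (by omega) (by omega) hi2 _ _ hx hm2 h2
          have hEq := hE.1 i hi1 hi2
          exact hEq.2.2 _ hm1 _ hx _ hm2 (hEq.2.1 _ hx _ hm1 hc1) hc2
        · have hd2 : d ≤ n - 2 := by omega
          have hsucc : n - i - d = (n - i - d - 1) + 1 := by omega
          rw [hsucc, List.take_succ_cons, List.take_succ_cons]
          by_cases haa : a = a'
          · subst haa
            rw [hν_cons, hν_cons]
            have hy := (hch d x hx hd2).1 a
            have := ihl l'' (d + 1) (ch d x a) hy.1 (by omega) (by omega) i hi1 hi2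
            rw [this]
            have harith : n - i - (d + 1) = n - i - d - 1 := by omega
            rw [harith]
            constructor
            · intro hh; rw [hh]
            · intro hh; exact (List.cons.injEq _ _ _ _).mp hh |>.2
          · refine iff_of_false ?_ (by simp [haa])
            intro hEi
            have hy := (hch d x hx hd2).1 a
            have hy' := (hch d x hx hd2).1 a'
            have hne := (hch d x hx hd2).2 a a' haa
            apply hne
            rw [hν_cons, hν_cons] at hEi
            have hstep : E (n - (d + 1)) (ch d x a) (ν (d + 1) (ch d x a) l) :=
              P2 l (d + 1) _ hy.1 (by omega)
            have hstep' : E (n - (d + 1)) (ch d x a') (ν (d + 1) (ch d x a') l'') :=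
              P2 l'' (d + 1) _ hy'.1 (by omega)
            have hm1 : ν (d + 1) (ch d x a) l ∈ X := P1 _ _ _ hy.1 (by omega)
            have hm2 : ν (d + 1) (ch d x a') l'' ∈ X := P1 _ _ _ hy'.1 (by omega)
            have harith : n - (d + 1) = n - d - 1 := by omega
            rw [harith] at hstep hstep'
            have hco : E (n - d - 1) (ν (d + 1) (ch d x a) l) (ν (d + 1) (ch d x a') l'') :=
              coarsen hE i (n - d - 1) hi1 (by omega) (by omega) _ _ hm1 hm2 hEi
            have hEq := hE.1 (n - d - 1) (by omega) (by omega)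
            exact hEq.2.2 _ hy.1 _ hm1 _ hy'.1 hstep
              (hEq.2.2 _ hm1 _ hm2 _ hy'.1 hco (hEq.2.1 _ hy'.1 _ hm2 hstep'))
  refine ⟨fun l => ν 0 x₀ l, ?_, ?_⟩
  · intro l hl
    exact P1 l 0 x₀ hx₀ (by omega)
  · intro i hi1 hi2 l l' hl hl'
    have := Pmain l l' 0 x₀ hx₀ (by omega) (by omega) i hi1 hi2
    rwa [Nat.sub_zero] at this


end Stmt8Aux

open Stmt8Aux in
/-- Given an infinitely finer sequence `E 1 <_∞ ⋯ <_∞ E n` on an infinite `X ⊆ ω` and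
`f : ω → ω`, there is an infinite `Y ⊆ X` on which the sequence is still infinitely finer
and `f` is one-to-one, constant, or constant exactly on the classes of some `E i`. -/
theorem stmt8 (X : Set ℕ) (hX : X.Infinite) (n : ℕ) (E : ℕ → ℕ → ℕ → Prop)
    (hE : IfSeq E n X) (f : ℕ → ℕ) :
    ∃ Y : Set ℕ, Y ⊆ X ∧ Y.Infinite ∧ IfSeq E n Y ∧
      (Set.InjOn f Y ∨ ConstOn f Y ∨
        ∃ i, 1 ≤ i ∧ i ≤ n ∧ ∀ x ∈ Y, ∀ y ∈ Y, (E i x y ↔ f x = f y)) := by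
  classical
  have eqvRestrict : ∀ (Y : Set ℕ) (i : ℕ), Y ⊆ X → 1 ≤ i → i ≤ n → EqvOn (E i) Y := by
    intro Y i hYX hi1 hi2
    have hEq := hE.1 i hi1 hi2
    exact ⟨fun x hx => hEq.1 x (hYX hx), fun x hx y hy => hEq.2.1 x (hYX hx) y (hYX hy),
      fun x hx y hy z hz => hEq.2.2 x (hYX hx) y (hYX hy) z (hYX hz)⟩
  rcases Nat.lt_or_ge n 2 with hn | hn
  · -- n ≤ 1 : no InfFiner requirements
    obtain ⟨Y, hYX, hYinf, hcase⟩ := PH X hX f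
    refine ⟨Y, hYX, hYinf, ⟨fun i hi1 hi2 => eqvRestrict Y i hYX hi1 hi2,
      fun i hi1 hi2 => by omega⟩, ?_⟩
    rcases hcase with hc | hinj
    · exact Or.inr (Or.inl hc)
    · exact Or.inl hinj
  · set m := n - 1 with hm
    have hm1 : 1 ≤ m := by omega
    obtain ⟨φ, hφX, hφE⟩ := normalization hX hn hE
    obtain ⟨G, hGemb, k, hk, hcan⟩ := canonB m (fun l => f (φ l))
    set Y : Set ℕ := (fun l => φ (EG G l)) '' {l | l.length = m} with hY
    have hmem : ∀ l, l.length = m → φ (EG G l) ∈ Y := fun l hl => ⟨l, hl, rfl⟩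
    have hYX : Y ⊆ X := by
      rintro x ⟨l, hl, rfl⟩
      exact hφX _ (by rw [EG_length]; exact hl)
    have hφinj : ∀ l l', l.length = m → l'.length = m → φ l = φ l' → l = l' := by
      intro l l' hl hl' heq
      have hrefl : E 1 (φ l) (φ l') := by
        rw [heq]
        exact (hE.1 1 le_rfl (by omega)).1 _ (hφX l' hl')
      have h1 := (hφE 1 le_rfl (by omega) l l' hl hl').mp hrefl
      rwa [List.take_of_length_le (by omega), List.take_of_length_le (by omega)] at h1
    have hYinf : Y.Infinite := by
      apply Set.infinite_of_injective_forall_mem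
        (f := fun a : ℕ => φ (EG G (List.replicate (m - 1) 0 ++ [a])))
      · intro a b hab
        have hla : (List.replicate (m - 1) 0 ++ [a]).length = m := by simp; omega
        have hlb : (List.replicate (m - 1) 0 ++ [b]).length = m := by simp; omega
        have h2 := EG_inj hGemb
          (hφinj _ _ (by rw [EG_length]; exact hla) (by rw [EG_length]; exact hlb) hab)
        have := List.append_cancel_left h2
        simpa using this
      · intro a
        exact hmem _ (by simp; omega)
    refine ⟨Y, hYX, hYinf, ⟨fun i hi1 hi2 => eqvRestrict Y i hYX hi1 hi2, ?_⟩, ?_⟩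
    · -- InfFiner on Y
      intro i hi1 hi2
      refine ⟨fun x hx y hy hxy => (hE.2 i hi1 hi2).1 x (hYX hx) y (hYX hy) hxy, ?_⟩
      rintro x ⟨l, hl, rfl⟩
      simp only [Set.mem_setOf_eq] at hl
      set j := n - i - 1 with hj
      have hjm : j < m := by omega
      set la : ℕ → List ℕ := fun a => l.take j ++ a :: l.drop (j + 1) with hla
      have hlen : ∀ a, (la a).length = m := by
        intro a
        simp [hla]
        omega
      have hya : ∀ a, φ (EG G (la a)) ∈ Y := fun a => hmem _ (hlen a)
      have htakej : ∀ a, (la a).take j = l.take j := by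
        intro a
        exact List.take_left' (by rw [List.length_take]; omega)
      have htakej1 : ∀ a, (la a).take (j + 1) = l.take j ++ [a] := by
        intro a
        rw [hla]
        simp only []
        rw [List.take_append,
          List.take_of_length_le (by rw [List.length_take]; omega)]
        congr 1
        rw [List.length_take, min_eq_left (by omega)]
        simp
      have hE2 : ∀ a, E (i + 1) (φ (EG G l)) (φ (EG G (la a))) := by
        intro a
        apply (hφE (i + 1) (by omega) (by omega) _ _
          (by rw [EG_length]; exact hl) (by rw [EG_length]; exact hlen a)).mpr
        rw [show n - (i + 1) = j from by omega, EG_take, EG_take, htakej a]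
      have hnotE : ∀ a b, a ≠ b → ¬ E i (φ (EG G (la a))) (φ (EG G (la b))) := by
        intro a b hab hEab
        have h2 := (hφE i hi1 (by omega) _ _
          (by rw [EG_length]; exact hlen a) (by rw [EG_length]; exact hlen b)).mp hEab
        rw [show n - i = j + 1 from by omega, EG_take, EG_take] at h2
        have h3 := EG_inj hGemb h2
        rw [htakej1 a, htakej1 b] at h3
        exact hab (by simpa using List.append_cancel_left h3)
      apply Set.infinite_of_injective_forall_mem
        (f := fun a : ℕ => eclass (E i) Y (φ (EG G (la a))))
      · intro a b hab
        by_contra hne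
        have hab' : eclass (E i) Y (φ (EG G (la a))) = eclass (E i) Y (φ (EG G (la b))) := hab
        have hmema : φ (EG G (la a)) ∈ eclass (E i) Y (φ (EG G (la a))) :=
          ⟨hya a, (hE.1 i hi1 (by omega)).1 _ (hYX (hya a))⟩
        rw [hab'] at hmema
        exact hnotE b a (Ne.symm hne) hmema.2
      · intro a
        exact ⟨φ (EG G (la a)), hya a, hE2 a, rfl⟩
    · -- outcomes
      by_cases hk0 : k = 0
      · refine Or.inr (Or.inl ⟨f (φ (EG G (List.replicate m 0))), ?_⟩)
        rintro x ⟨l, hl, rfl⟩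
        simp only [Set.mem_setOf_eq] at hl
        exact (hcan l (List.replicate m 0) hl (by simp)).mpr (by simp [hk0])
      · refine Or.inr (Or.inr ⟨n - k, by omega, by omega, ?_⟩)
        rintro x ⟨l, hl, rfl⟩ y ⟨l', hl', rfl⟩
        simp only [Set.mem_setOf_eq] at hl hl'
        have h1 := hφE (n - k) (by omega) (by omega) (EG G l) (EG G l')
          (by rw [EG_length]; exact hl) (by rw [EG_length]; exact hl')
        rw [show n - (n - k) = k from by omega, EG_take, EG_take] at h1
        rw [h1]
        constructor
        · intro hEq
          exact (hcan l l' hl hl').mpr (EG_inj hGemb hEq)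
        · intro hf
          rw [(hcan l l' hl hl').mp hf]
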